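/- For a connected bipartite graph G, all semicubes of G are convex if and only if Djoković's relation θ is an equivalence relation on the edge set of G. -/

import Mathlib

/-! In a connected bipartite graph no vertex is equidistant from the two ends of an edge `xy`,
so `W_xy` and `W_yx` partition the vertices and `e θ f` just says that `f` has one end on each
side of `e`.

If all semicubes are convex and `uv` crosses `xy`, then `W_uv = W_xy`: a vertex
`w ∈ W_uv ∩ W_yx` would put `u` on a geodesic from `w` to `v ∈ W_yx`, hence `u ∈ W_yx`. So
θ-related edges define the same pair of semicubes, which makes `θ` transitive.

Conversely, let `θ` be transitive and walk along a geodesic whose ends lie in `W_ab`. If the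
geodesic left `W_ab` through an edge `uu'`, it would have to come back through a later edge `f`;
both are θ-related to `ab`, hence to each other. But every vertex after `u` on a geodesic is
closer to `u'` than to `u`, so `f` does not cross `uu'`. -/

/-- The semicube `W_ab` of a graph: the set of vertices closer to `a` than to `b`. -/
def semicube {V : Type} (G : SimpleGraph V) (a b : V) : Set V :=
  {w | G.dist w a < G.dist w b}

/-- A set of vertices is convex if it contains every vertex lying on a shortest
path between two of its members. -/
def GraphConvex {V : Type} (G : SimpleGraph V) (S : Set V) : Prop :=
  ∀ u ∈ S, ∀ v ∈ S, ∀ w : V, G.dist u w + G.dist w v = G.dist u v → w ∈ S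

/-- Djoković's relation `θ` on the edge set of a graph: `e θ f` iff for some
orientations `e = xy` and `f = uv`, the edge `f` joins a vertex of `W_xy` with
a vertex of `W_yx`. -/
def DjokovicRel {V : Type} (G : SimpleGraph V) (e f : G.edgeSet) : Prop :=
  ∃ x y u v : V, (e : Sym2 V) = s(x, y) ∧ (f : Sym2 V) = s(u, v) ∧
    u ∈ semicube G x y ∧ v ∈ semicube G y x

open SimpleGraph

section

variable {V : Type} {G : SimpleGraph V} {a b u v w x y : V}

theorem SimpleGraph.Connected.dist_ne_dist_of_adj (hconn : G.Connected) (hbip : G.Colorable 2)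
    (hxy : G.Adj x y) (w : V) : G.dist w x ≠ G.dist w y := by
  intro heq
  obtain ⟨p, hp⟩ := hconn.exists_walk_length_eq_dist w x
  obtain ⟨q, hq⟩ := hconn.exists_walk_length_eq_dist w y
  have hodd : Odd ((p.concat hxy).append q.reverse).length := by
    simp only [Walk.length_append, Walk.length_concat, Walk.length_reverse, hp, hq, heq]
    exact ⟨G.dist w y, by ring⟩
  exact Nat.not_even_iff_odd.mpr hodd (two_colorable_iff_forall_loop_even.mp hbip w _)

theorem SimpleGraph.Walk.mem_semicube_of_length_cons_eq_dist {u' : V} (h : G.Adj u u')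
    (p : G.Walk u' v) (hp : (p.cons h).length = G.dist u v) {z : V} (hz : z ∈ p.support) :
    z ∈ semicube G u' u := by
  classical
  have htake : (p.takeUntil z hz).length = G.dist u' z :=
    length_eq_dist_of_subwalk hp ((p.isSubwalk_takeUntil hz).trans (p.isSubwalk_cons h))
  have hcons : ((p.takeUntil z hz).cons h).length = G.dist u z :=
    length_eq_dist_of_subwalk hp <| Walk.isSubwalk_of_append_left (p₂ := p.dropUntil z hz) <| by
      rw [Walk.cons_append, p.take_spec hz]
  simp only [semicube, Set.mem_ofPred_eq, dist_comm (u := z)]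
  rw [Walk.length_cons, htake] at hcons
  omega

theorem mem_semicube_left (hxy : G.Adj x y) : x ∈ semicube G x y := by
  simp [semicube, dist_eq_one_iff_adj.mpr hxy]

theorem notMem_semicube_of_mem_semicube_swap (hw : w ∈ semicube G y x) :
    w ∉ semicube G x y := by
  simp only [semicube, Set.mem_ofPred_eq] at hw ⊢
  omega

theorem mem_semicube_iff_dist_eq (hconn : G.Connected) (hbip : G.Colorable 2)
    (hxy : G.Adj x y) : w ∈ semicube G x y ↔ G.dist w y = G.dist w x + 1 := by
  have hne := hconn.dist_ne_dist_of_adj hbip hxy w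
  have hcases := hxy.diff_dist_adj (u := w)
  simp only [semicube, Set.mem_ofPred_eq]
  omega

theorem compl_semicube (hconn : G.Connected) (hbip : G.Colorable 2) (hxy : G.Adj x y) :
    (semicube G x y)ᶜ = semicube G y x := by
  ext w
  have hne := hconn.dist_ne_dist_of_adj hbip hxy w
  simp only [semicube, Set.mem_compl_iff, Set.mem_ofPred_eq, not_lt]
  omega

/-- Both triangle inequalities through the edge `uv` are tight, which forces
`d(u, x) = d(v, y)`. -/
theorem mem_semicube_of_crossing (hconn : G.Connected) (hbip : G.Colorable 2)
    (hxy : G.Adj x y) (huv : G.Adj u v) (hu : u ∈ semicube G x y) (hv : v ∈ semicube G y x) :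
    x ∈ semicube G u v ∧ y ∈ semicube G v u := by
  rw [mem_semicube_iff_dist_eq hconn hbip hxy] at hu
  rw [mem_semicube_iff_dist_eq hconn hbip hxy.symm] at hv
  have huy : G.dist u y ≤ G.dist u v + G.dist v y := hconn.dist_triangle
  have hvx : G.dist v x ≤ G.dist v u + G.dist u x := hconn.dist_triangle
  simp only [semicube, Set.mem_ofPred_eq, dist_comm (u := x), dist_comm (u := y),
    dist_eq_one_iff_adj.mpr huv, dist_eq_one_iff_adj.mpr huv.symm] at huy hvx ⊢
  omega

theorem semicube_subset_of_crossing (hconn : G.Connected) (hbip : G.Colorable 2)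
    (hcvx : ∀ a b : V, G.Adj a b → GraphConvex G (semicube G a b))
    (hxy : G.Adj x y) (huv : G.Adj u v) (hu : u ∈ semicube G x y) (hv : v ∈ semicube G y x) :
    semicube G u v ⊆ semicube G x y := by
  intro w hw
  by_contra hwxy
  rw [← Set.mem_compl_iff, compl_semicube hconn hbip hxy] at hwxy
  have hgeod : G.dist w u + G.dist u v = G.dist w v := by
    rw [dist_eq_one_iff_adj.mpr huv]
    exact ((mem_semicube_iff_dist_eq hconn hbip huv).mp hw).symm
  exact notMem_semicube_of_mem_semicube_swap (hcvx y x hxy.symm w hwxy v hv u hgeod) hu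

theorem semicube_eq_of_crossing (hconn : G.Connected) (hbip : G.Colorable 2)
    (hcvx : ∀ a b : V, G.Adj a b → GraphConvex G (semicube G a b))
    (hxy : G.Adj x y) (huv : G.Adj u v) (hu : u ∈ semicube G x y) (hv : v ∈ semicube G y x) :
    semicube G u v = semicube G x y := by
  refine (semicube_subset_of_crossing hconn hbip hcvx hxy huv hu hv).antisymm ?_
  have hswap := semicube_subset_of_crossing hconn hbip hcvx hxy.symm huv.symm hv hu
  rwa [← compl_semicube hconn hbip hxy, ← compl_semicube hconn hbip huv,
    Set.compl_subset_compl] at hswap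

theorem adj_of_coe_eq {e : G.edgeSet} (he : (e : Sym2 V) = s(x, y)) : G.Adj x y :=
  G.mem_edgeSet.mp (he ▸ e.2)

theorem djokovicRel_refl (e : G.edgeSet) : DjokovicRel G e e := by
  obtain ⟨e, he⟩ := e
  induction e using Sym2.ind with
  | h x y =>
    have hxy : G.Adj x y := G.mem_edgeSet.mp he
    exact ⟨x, y, x, y, rfl, rfl, mem_semicube_left hxy, mem_semicube_left hxy.symm⟩

theorem djokovicRel_symm (hconn : G.Connected) (hbip : G.Colorable 2) {e f : G.edgeSet}
    (hef : DjokovicRel G e f) : DjokovicRel G f e := by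
  obtain ⟨x, y, u, v, he, hf, hu, hv⟩ := hef
  obtain ⟨hx, hy⟩ :=
    mem_semicube_of_crossing hconn hbip (adj_of_coe_eq he) (adj_of_coe_eq hf) hu hv
  exact ⟨u, v, x, y, hf, he, hx, hy⟩

theorem djokovicRel_trans_of_convex (hconn : G.Connected) (hbip : G.Colorable 2)
    (hcvx : ∀ a b : V, G.Adj a b → GraphConvex G (semicube G a b)) :
    ∀ {e f g}, DjokovicRel G e f → DjokovicRel G f g → DjokovicRel G e g := by
  rintro e f g ⟨x, y, u, v, he, hf, hu, hv⟩ ⟨x', y', u', v', hf', hg, hu', hv'⟩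
  have hxy := adj_of_coe_eq he
  have huv := adj_of_coe_eq hf
  have huv_eq := semicube_eq_of_crossing hconn hbip hcvx hxy huv hu hv
  have hvu_eq := semicube_eq_of_crossing hconn hbip hcvx hxy.symm huv.symm hv hu
  rcases Sym2.eq_iff.mp (hf'.symm.trans hf) with ⟨rfl, rfl⟩ | ⟨rfl, rfl⟩
  · exact ⟨x, y, u', v', he, hg, huv_eq ▸ hu', hvu_eq ▸ hv'⟩
  · exact ⟨y, x, u', v', he.trans Sym2.eq_swap, hg, hvu_eq ▸ hu', huv_eq ▸ hv'⟩

theorem not_djokovicRel_of_forall_mem_semicube {e f : G.edgeSet}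
    (he : (e : Sym2 V) = s(x, y)) (hf : ∀ z ∈ (f : Sym2 V), z ∈ semicube G y x) :
    ¬ DjokovicRel G e f := by
  rintro ⟨x', y', u, v, he', hf', hu, hv⟩
  have hu' := hf u (hf' ▸ Sym2.mem_mk_left u v)
  have hv' := hf v (hf' ▸ Sym2.mem_mk_right u v)
  rcases Sym2.eq_iff.mp (he'.symm.trans he) with ⟨rfl, rfl⟩ | ⟨rfl, rfl⟩
  · exact notMem_semicube_of_mem_semicube_swap hu' hu
  · exact notMem_semicube_of_mem_semicube_swap hv' hv

theorem SimpleGraph.Walk.support_subset_semicube_of_transitive (hconn : G.Connected)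
    (hbip : G.Colorable 2)
    (htrans : ∀ {e f g}, DjokovicRel G e f → DjokovicRel G f g → DjokovicRel G e g)
    (hab : G.Adj a b) (r : G.Walk u v) (hr : r.length = G.dist u v)
    (hu : u ∈ semicube G a b) (hv : v ∈ semicube G a b) :
    ∀ z ∈ r.support, z ∈ semicube G a b := by
  induction r with
  | nil => simpa using hu
  | @cons u u' v h r ih =>
    have hr' : r.length = G.dist u' v := length_eq_dist_of_subwalk hr (r.isSubwalk_cons h)
    by_cases hu' : u' ∈ semicube G a b
    · simpa [hu] using ih hr' hu' hv
    exfalso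
    obtain ⟨d, hd, hfst, hsnd⟩ :=
      r.exists_boundary_dart (semicube G a b)ᶜ hu' (by simpa using hv)
    rw [compl_semicube hconn hbip hab] at hfst
    rw [← Set.mem_compl_iff, compl_semicube hconn hbip hab] at hu'
    have hexit :
        DjokovicRel G ⟨s(a, b), G.mem_edgeSet.mpr hab⟩ ⟨s(u, u'), G.mem_edgeSet.mpr h⟩ :=
      ⟨a, b, u, u', rfl, rfl, hu, hu'⟩
    have hreturn : DjokovicRel G ⟨s(a, b), G.mem_edgeSet.mpr hab⟩ ⟨d.edge, d.edge_mem⟩ :=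
      ⟨a, b, d.snd, d.fst, rfl, Sym2.eq_swap, by simpa using hsnd, hfst⟩
    refine not_djokovicRel_of_forall_mem_semicube (e := ⟨s(u, u'), G.mem_edgeSet.mpr h⟩) rfl
      ?_ (htrans (djokovicRel_symm hconn hbip hexit) hreturn)
    intro z hz
    rcases Sym2.mem_iff.mp hz with rfl | rfl
    · exact r.mem_semicube_of_length_cons_eq_dist h hr (r.dart_fst_mem_support_of_mem_darts hd)
    · exact r.mem_semicube_of_length_cons_eq_dist h hr (r.dart_snd_mem_support_of_mem_darts hd)

theorem graphConvex_semicube_of_transitive (hconn : G.Connected) (hbip : G.Colorable 2)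
    (htrans : ∀ {e f g}, DjokovicRel G e f → DjokovicRel G f g → DjokovicRel G e g)
    (hab : G.Adj a b) :
    GraphConvex G (semicube G a b) := by
  intro u hu v hv w hw
  obtain ⟨p, hp⟩ := hconn.exists_walk_length_eq_dist u w
  obtain ⟨q, hq⟩ := hconn.exists_walk_length_eq_dist w v
  refine Walk.support_subset_semicube_of_transitive hconn hbip htrans hab (p.append q)
    (by rw [Walk.length_append, hp, hq, hw]) hu hv w ?_
  exact (p.mem_support_append_iff q).mpr (Or.inl p.end_mem_support)

end

/-- For a connected bipartite graph, all semicubes are convex if and only if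
Djoković's relation `θ` is an equivalence relation on the edge set. -/
theorem semicubes_convex_iff_theta_equivalence {V : Type} (G : SimpleGraph V)
    (hconn : G.Connected) (hbip : G.Colorable 2) :
    (∀ a b : V, G.Adj a b → GraphConvex G (semicube G a b)) ↔
      Equivalence (DjokovicRel G) :=
  ⟨fun hcvx => ⟨djokovicRel_refl, djokovicRel_symm hconn hbip,
      djokovicRel_trans_of_convex hconn hbip hcvx⟩,
    fun hθ _ _ => graphConvex_semicube_of_transitive hconn hbip hθ.trans⟩
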